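/- arXiv:2105.03798 — 4 statements merged into one kernel-verified Lean document; each statement's English description precedes it below -/
import Mathlib

section
/- Let F be a free group of finite rank, let H be a finitely generated subgroup of F, and let u ∈ F. Then the coset spectrum of F with respect to Hu is bounded: there exists N ∈ ℕ such that for every w ∈ F, Ord_{Hu}(w) ≤ N. In particular, the spectrum Ord_H(F) is bounded. -/
/-- The relative order of `g` in the subgroup `H`: the least `k ≥ 1` with `g ^ k ∈ H`,
and `0` if no such `k` exists. -/
noncomputable def relOrd {G : Type*} [Group G] (H : Subgroup G) (g : G) : ℕ :=
  sInf {k : ℕ | 1 ≤ k ∧ g ^ k ∈ H}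

/-- The relative order of `g` in the coset `Hu`: the least `k ≥ 1` with `g ^ k ∈ Hu`,
and `0` if no such `k` exists. -/
noncomputable def relOrdCoset {G : Type*} [Group G] (H : Subgroup G) (u g : G) : ℕ :=
  sInf {k : ℕ | 1 ≤ k ∧ g ^ k * u⁻¹ ∈ H}

/-
The prefixes of `g` in a free group are the elements spelled by the initial segments of its
reduced word. Free cancellation gives `prefixes (g * h) ⊆ prefixes g ∪ g • prefixes h`, so if `H`
is generated by a finite set `S`, every prefix of an element of `H u` lies in a right coset `H x`
with `x` among the finitely many prefixes of `u` and of the elements of `S ∪ S⁻¹` (these cosets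
are the vertices of the Stallings graph of `H`).

If the reduced word of `w` is `c r c⁻¹` with `r` cyclically reduced, then that of `w ^ k` is
`c r ^ k c⁻¹`, whose prefixes include `w ^ i c` for all `i < k`. For the least `k ≥ 1` with
`w ^ k ∈ H u`, the cosets `H w ^ i c` with `i < k` are pairwise distinct: `H w ^ i c = H w ^ j c`
with `i < j` gives `w ^ (j - i) ∈ H`, hence `w ^ (k - (j - i)) ∈ H u`. So `k` is bounded by the
number of cosets found above, independently of `w`.
-/

section RelativeOrder

variable {G : Type*} [Group G] {H : Subgroup G}

theorem relOrd_eq_relOrdCoset_one (g : G) : relOrd H g = relOrdCoset H 1 g := by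
  simp [relOrd, relOrdCoset]

theorem relOrdCoset_le_sub {u w : G} {k d : ℕ} (hk : w ^ k * u⁻¹ ∈ H) (hd : w ^ d ∈ H)
    (hdk : d < k) : relOrdCoset H u w ≤ k - d :=
  Nat.sInf_le ⟨by omega, by
    have hsub : w ^ (k - d) = (w ^ d)⁻¹ * w ^ k := by
      rw [eq_inv_mul_iff_mul_eq, ← pow_add, Nat.add_sub_cancel' hdk.le]
    simpa only [hsub, mul_assoc] using H.mul_mem (H.inv_mem hd) hk⟩

theorem QuotientGroup.rightRel_mk_mul_of_mem {x : G} (hx : x ∈ H) (y : G) :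
    Quotient.mk (QuotientGroup.rightRel H) (x * y) = Quotient.mk _ y :=
  Quotient.sound (QuotientGroup.rightRel_apply.2 (by simpa using H.inv_mem hx))

theorem relOrdCoset_le_card {u w : G} (p : G) (T : Finset (Quotient (QuotientGroup.rightRel H)))
    (hT : ∀ k, w ^ k * u⁻¹ ∈ H → ∀ i < k, Quotient.mk _ (w ^ i * p) ∈ T) :
    relOrdCoset H u w ≤ T.card := by
  set S := {k | 1 ≤ k ∧ w ^ k * u⁻¹ ∈ H}
  rcases S.eq_empty_or_nonempty with hS | hS
  · simp [relOrdCoset, S, hS]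
  obtain ⟨-, hk⟩ : relOrdCoset H u w ∈ S := Nat.sInf_mem hS
  set k := relOrdCoset H u w
  calc k = (Finset.range k).card := (Finset.card_range k).symm
    _ ≤ T.card := Finset.card_le_card_of_injOn _ (fun i hi => hT k hk i (by simpa using hi)) ?_
  intro i hi j hj hij
  simp only [Finset.coe_range, Set.mem_Iio] at hi hj
  by_contra hne
  wlog hlt : i < j generalizing i j
  · exact this hij.symm hj hi (Ne.symm hne) (by omega)
  have hji : w ^ (j - i) ∈ H := by
    have := QuotientGroup.rightRel_apply.1 (Quotient.exact hij)
    rwa [mul_inv_rev, mul_assoc, mul_inv_cancel_left, ← pow_sub _ hlt.le] at this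
  have := relOrdCoset_le_sub hk hji (by omega)
  omega

end RelativeOrder

open scoped Pointwise

namespace FreeGroup

variable {α : Type*} [DecidableEq α]

def prefixes (g : FreeGroup α) : Set (FreeGroup α) := mk '' {l | l <+: g.toWord}

theorem prefixes_finite (g : FreeGroup α) : (prefixes g).Finite := by
  refine ((List.finite_toSet g.toWord.inits).image mk).subset ?_
  rintro _ ⟨l, hl, rfl⟩
  exact ⟨l, (List.mem_inits _ _).2 hl, rfl⟩

theorem mk_prefix_reduce_cons {q l : List (α × Bool)} (x : α × Bool) (hq : q <+: reduce (x :: l)) :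
    q = [] ∨ ∃ q', q' <+: reduce l ∧ mk q = mk [x] * mk q' := by
  rw [reduce.cons] at hq
  rcases hl : reduce l with _ | ⟨y, r⟩ <;> rw [hl] at hq
  · simp only [List.prefix_cons_iff, List.prefix_nil] at hq
    rcases hq with rfl | ⟨t, rfl, rfl⟩
    · exact .inl rfl
    · exact .inr ⟨[], List.nil_prefix, by simp [mul_mk]⟩
  · dsimp only at hq
    split_ifs at hq with hxy
    · refine .inr ⟨y :: q, List.cons_prefix_cons.2 ⟨rfl, hq⟩, ?_⟩
      obtain ⟨a, b⟩ := x
      obtain ⟨c, d⟩ := y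
      obtain ⟨rfl, rfl⟩ : a = c ∧ b = !d := hxy
      rw [mul_mk]
      exact (Quot.sound Red.Step.cons_not_rev).symm
    · rcases List.prefix_cons_iff.1 hq with rfl | ⟨t, rfl, ht⟩
      · exact .inl rfl
      · exact .inr ⟨t, ht, by rw [mul_mk]; rfl⟩

theorem mk_prefix_reduce_append {q : List (α × Bool)} (a b : List (α × Bool))
    (hq : q <+: reduce (a ++ b)) :
    (∃ q', q' <+: a ∧ mk q = mk q') ∨ ∃ q', q' <+: reduce b ∧ mk q = mk a * mk q' := by
  induction a generalizing q with
  | nil => exact .inr ⟨q, by simpa using hq, by simp [← one_eq_mk]⟩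
  | cons x a ih =>
    rcases mk_prefix_reduce_cons x hq with rfl | ⟨q', hq', hmk⟩
    · exact .inl ⟨[], List.nil_prefix, rfl⟩
    rcases ih hq' with ⟨p, hp, hmk'⟩ | ⟨p, hp, hmk'⟩
    · exact .inl ⟨x :: p, List.cons_prefix_cons.2 ⟨rfl, hp⟩, by rw [hmk, hmk', mul_mk]; rfl⟩
    · exact .inr ⟨p, hp, by rw [hmk, hmk', ← mul_assoc, mul_mk]; rfl⟩

theorem prefixes_mul_subset (g h : FreeGroup α) :
    prefixes (g * h) ⊆ prefixes g ∪ g • prefixes h := by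
  rintro _ ⟨q, hq, rfl⟩
  rw [Set.mem_ofPred_eq, toWord_mul] at hq
  rcases mk_prefix_reduce_append _ _ hq with ⟨q', hq', hmk⟩ | ⟨q', hq', hmk⟩
  · exact .inl ⟨q', hq', hmk.symm⟩
  · rw [reduce_toWord] at hq'
    rw [mk_toWord] at hmk
    exact .inr ⟨mk q', ⟨q', hq', rfl⟩, hmk.symm⟩

open reduceCyclically in
theorem exists_pow_mul_mem_prefixes_pow (w : FreeGroup α) :
    ∃ p, ∀ k, ∀ i < k, w ^ i * p ∈ prefixes (w ^ k) := by
  set c := conjugator w.toWord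
  set r := reduceCyclically w.toWord
  have hw : w = mk c * mk r * (mk c)⁻¹ := by
    rw [inv_mk, mul_mk, mul_mk, conj_conjugator_reduceCyclically, mk_toWord]
  refine ⟨mk c, fun k i hik => ⟨c ++ (List.replicate i r).flatten, ?_, ?_⟩⟩
  · rw [Set.mem_ofPred_eq, toWord_pow, reduce_flatten_replicate isReduced_toWord,
      if_neg (by omega), ← Nat.add_sub_cancel' hik.le, List.replicate_add, List.flatten_append,
      ← List.append_assoc]
    exact List.prefix_append_of_prefix (List.prefix_append _ _)
  · rw [hw, conj_pow, inv_mul_cancel_right, ← mul_mk, ← pow_mk]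

theorem prefixes_one : prefixes (1 : FreeGroup α) = {1} := by
  ext x
  simp [prefixes, List.prefix_nil, ← one_eq_mk]

theorem mk_prefix_mem_image_of_mem_closure {H : Subgroup (FreeGroup α)} {S : Set (FreeGroup α)}
    (hSH : S ⊆ H) {h : FreeGroup α} (hh : h ∈ Subgroup.closure S) :
    ∀ x ∈ prefixes h, Quotient.mk (QuotientGroup.rightRel H) x ∈
      Quotient.mk _ '' insert 1 (⋃ s ∈ S, prefixes s ∪ prefixes s⁻¹) := by
  induction hh using Subgroup.closure_induction'' with
  | mem s hs => exact fun x hx => ⟨x, .inr (Set.mem_biUnion hs (.inl hx)), rfl⟩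
  | inv_mem s hs => exact fun x hx => ⟨x, .inr (Set.mem_biUnion hs (.inr hx)), rfl⟩
  | one => simp [prefixes_one]
  | mul g h hg _ ihg ihh =>
    intro x hx
    rcases prefixes_mul_subset g h hx with hx | hx
    · exact ihg x hx
    · obtain ⟨y, hy, rfl⟩ := Set.mem_smul_set.1 hx
      rw [smul_eq_mul, QuotientGroup.rightRel_mk_mul_of_mem ((Subgroup.closure_le H).2 hSH hg)]
      exact ihh y hy

theorem exists_finite_cosets_prefixes {H : Subgroup (FreeGroup α)} (hH : H.FG) (u : FreeGroup α) :
    ∃ T : Set (Quotient (QuotientGroup.rightRel H)), T.Finite ∧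
      ∀ z, z * u⁻¹ ∈ H → ∀ x ∈ prefixes z, Quotient.mk _ x ∈ T := by
  obtain ⟨S, hS⟩ := hH
  set P := insert 1 (⋃ s ∈ S, prefixes s ∪ prefixes s⁻¹)
  have hP : P.Finite := ((S.finite_toSet.biUnion fun s _ =>
    (prefixes_finite s).union (prefixes_finite s⁻¹)).insert 1)
  refine ⟨Quotient.mk _ '' (P ∪ prefixes u), (hP.union (prefixes_finite u)).image _,
    fun z hz x hx => ?_⟩
  rw [← inv_mul_cancel_right z u] at hx
  rcases prefixes_mul_subset _ _ hx with hx | hx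
  · exact Set.image_mono Set.subset_union_left
      (mk_prefix_mem_image_of_mem_closure (hS ▸ Subgroup.subset_closure) (hS ▸ hz) x hx)
  · obtain ⟨y, hy, rfl⟩ := Set.mem_smul_set.1 hx
    rw [smul_eq_mul, QuotientGroup.rightRel_mk_mul_of_mem hz]
    exact ⟨y, .inr hy, rfl⟩

theorem exists_relOrdCoset_le {H : Subgroup (FreeGroup α)} (hH : H.FG) (u : FreeGroup α) :
    ∃ N, ∀ w, relOrdCoset H u w ≤ N := by
  obtain ⟨T, hT, hpref⟩ := exists_finite_cosets_prefixes hH u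
  refine ⟨hT.toFinset.card, fun w => ?_⟩
  obtain ⟨p, hp⟩ := exists_pow_mul_mem_prefixes_pow w
  exact relOrdCoset_le_card p _ fun k hk i hi => hT.mem_toFinset.2 (hpref _ hk _ (hp k i hi))

end FreeGroup

/-- Coset spectra of finitely generated subgroups of free groups of finite rank are bounded;
in particular subgroup spectra are bounded. -/
theorem coset_spectrum_bounded (n : ℕ) (H : Subgroup (FreeGroup (Fin n))) (hH : H.FG)
    (u : FreeGroup (Fin n)) :
    (∃ N : ℕ, ∀ w : FreeGroup (Fin n), relOrdCoset H u w ≤ N) ∧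
    (∃ N : ℕ, ∀ w : FreeGroup (Fin n), relOrd H w ≤ N) := by
  refine ⟨FreeGroup.exists_relOrdCoset_le hH u, ?_⟩
  simpa only [relOrd_eq_relOrdCoset_one] using FreeGroup.exists_relOrdCoset_le hH 1
end

section
/- Let F be a free group of finite rank, let H be a finitely generated subgroup of F, and let k ≥ 1. Then there exist finitely many elements w₀ = 1, w₁, …, w_t ∈ F, each of relative order in H dividing k, such that the set of k-roots {g ∈ F : g^k ∈ H} equals the union over i = 0, …, t of the sets { h⁻¹ x w_i h : h ∈ H, x ∈ H ∩ w_i⁻¹Hw_i ∩ w_i⁻²Hw_i² ∩ ⋯ ∩ w_i^{-(k-1)}Hw_i^{k-1} }, i.e. the H-conjugates of the cosets (H ∩ H^{w_i} ∩ ⋯ ∩ H^{w_i^{k-1}}) w_i. -/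
/-!
Write `g = u c u⁻¹` with `c` cyclically reduced. If `g ^ k ∈ H`, the reduced word of `g ^ k` is
`u c^k u⁻¹`, whose prefixes include the reduced words of `g ^ j * u = u c ^ j` for `j ≤ k`.
If `H` is generated by elements of length at most `B`, every prefix of the reduced word of an
element of `H` represents an element of a right coset `H r` with `|r| ≤ B`, by induction on the number of generators:
a prefix of the reduced word of `h * s` is either a prefix of the word of `h` or represents `h`
times a prefix of the word of `s`. Hence the sequence of right cosets
`(H g ^ j u)_{j ≤ k}` takes only finitely many values as `g` ranges over the `k`-roots. If two roots
`g`, `w` give the same sequence, then `H g ^ j x = H w ^ j` for all `j ≤ k` with `x ∈ H`, and this is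
exactly membership of `g` in the `H`-conjugates of `(H ∩ H^w ∩ ⋯ ∩ H^{w^{k-1}}) w`.
Choosing one root per sequence gives the `wᵢ`.
-/

open List

namespace FreeGroup

variable {α : Type*} [DecidableEq α]

theorem reduce_append_of_isReduced {L₁ L₂ : List (α × Bool)} (h₁ : IsReduced L₁)
    (h₂ : IsReduced L₂) :
    ∃ a b d, L₁ = a ++ b ∧ L₂ = invRev b ++ d ∧ reduce (L₁ ++ L₂) = a ++ d := by
  induction L₁ with
  | nil => exact ⟨[], [], L₂, rfl, rfl, h₂.reduce_eq⟩
  | cons x L ih =>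
    obtain ⟨a, b, d, rfl, rfl, hr⟩ := ih (h₁.infix (suffix_cons x _).isInfix)
    rw [cons_append, reduce.cons, hr]
    rcases a with _ | ⟨y, a⟩
    · rcases d with _ | ⟨y, d⟩
      · exact ⟨[x], b, [], rfl, by simp, rfl⟩
      · dsimp only [nil_append]
        split_ifs with hxy
        · refine ⟨[], x :: b, d, rfl, ?_, rfl⟩
          obtain ⟨x₁, x₂⟩ := x
          obtain ⟨y₁, y₂⟩ := y
          simp only at hxy
          obtain ⟨rfl, rfl⟩ := hxy
          simp [invRev]
        · exact ⟨[x], b, y :: d, rfl, rfl, rfl⟩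
    · have hxy : ¬(x.1 = y.1 ∧ x.2 = !y.2) := by
        rintro ⟨h1, h2⟩
        have := (isReduced_cons_cons.mp h₁).1 h1
        cases x.2 <;> simp_all
      exact ⟨x :: y :: a, b, d, rfl, rfl, by simp [hxy]⟩

theorem prefix_toWord_mul {x y : FreeGroup α} {p : List (α × Bool)}
    (hp : p <+: (x * y).toWord) : p <+: x.toWord ∨ ∃ s, s <+: y.toWord ∧ mk p = x * mk s := by
  obtain ⟨a, b, d, hx, hy, hxy⟩ :=
    reduce_append_of_isReduced (isReduced_toWord (x := x)) (isReduced_toWord (x := y))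
  rw [toWord_mul, hxy] at hp
  rcases le_or_gt p.length a.length with hpa | hap
  · exact .inl <| hx ▸ (prefix_of_prefix_length_le hp (prefix_append a d) hpa).trans
      (prefix_append a b)
  · obtain ⟨e, rfl⟩ := prefix_of_prefix_length_le (prefix_append a d) hp hap.le
    refine .inr ⟨invRev b ++ e, hy ▸ (prefix_append_right_inj _).mpr
      ((prefix_append_right_inj a).mp hp), ?_⟩
    rw [← mk_toWord (x := x), hx, ← mul_mk, ← mul_mk, ← mul_mk, ← inv_mk]
    group

theorem exists_norm_le_mul_inv_mem_of_prefix {S : Set (FreeGroup α)} {B : ℕ}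
    (hS : ∀ z ∈ S, norm z ≤ B) {h : FreeGroup α} (hh : h ∈ Subgroup.closure S)
    {p : List (α × Bool)} (hp : p <+: h.toWord) :
    ∃ r, norm r ≤ B ∧ mk p * r⁻¹ ∈ Subgroup.closure S := by
  have step : ∀ x ∈ Subgroup.closure S, ∀ y, norm y ≤ B →
      (∀ p, p <+: x.toWord → ∃ r, norm r ≤ B ∧ mk p * r⁻¹ ∈ Subgroup.closure S) →
      ∀ p, p <+: (x * y).toWord → ∃ r, norm r ≤ B ∧ mk p * r⁻¹ ∈ Subgroup.closure S := by
    intro x hx y hy ih p hp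
    rcases prefix_toWord_mul hp with hp | ⟨s, hs, hps⟩
    · exact ih p hp
    · refine ⟨mk s, norm_mk_le.trans (hs.length_le.trans hy), ?_⟩
      rwa [hps, mul_inv_cancel_right]
  induction hh using Subgroup.closure_induction_right generalizing p with
  | one =>
    obtain rfl : p = [] := prefix_nil.mp hp
    exact ⟨1, by simp, by simp [← one_eq_mk]⟩
  | mul_right x hx y hy ih => exact step x hx y (hS y hy) (fun q hq => ih hq) p hp
  | mul_inv_cancel x hx y hy ih =>
    exact step x hx y⁻¹ (norm_inv_eq.trans_le (hS y hy)) (fun q hq => ih hq) p hp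

open reduceCyclically in
theorem exists_prefix_toWord_pow (g : FreeGroup α) :
    ∃ u, ∀ {j k : ℕ}, j ≤ k → k ≠ 0 → ∃ p, p <+: (g ^ k).toWord ∧ mk p = g ^ j * u := by
  set C := conjugator g.toWord
  set Z := reduceCyclically g.toWord
  have hg : g = mk C * mk Z * (mk C)⁻¹ := by
    rw [inv_mk, mul_mk, mul_mk, conj_conjugator_reduceCyclically, mk_toWord]
  refine ⟨mk C, fun {j k} hjk hk => ⟨C ++ (replicate j Z).flatten, ?_, ?_⟩⟩
  · rw [toWord_pow, reduce_flatten_replicate isReduced_toWord, if_neg hk,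
      ← Nat.add_sub_cancel' hjk, replicate_add, flatten_append, ← append_assoc]
    exact prefix_append_of_prefix (prefix_append _ _)
  · rw [← mul_mk, ← pow_mk, hg, conj_pow]
    group

theorem finite_setOf_norm_le [Finite α] (B : ℕ) : {x : FreeGroup α | norm x ≤ B}.Finite :=
  (List.finite_length_le _ B).preimage toWord_injective.injOn

theorem exists_forall_pow_mul_inv_mem_of_fg {H : Subgroup (FreeGroup α)} (hH : H.FG) :
    ∃ B, ∀ {k : ℕ}, k ≠ 0 → ∀ g, g ^ k ∈ H →
      ∃ u, ∀ j ≤ k, ∃ r, norm r ≤ B ∧ g ^ j * u * r⁻¹ ∈ H := by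
  obtain ⟨S, rfl⟩ := hH
  refine ⟨S.sup norm, fun hk g hg => ?_⟩
  obtain ⟨u, hu⟩ := exists_prefix_toWord_pow g
  refine ⟨u, fun j hj => ?_⟩
  obtain ⟨p, hp, hpg⟩ := hu hj hk
  rw [← hpg]
  exact exists_norm_le_mul_inv_mem_of_prefix (fun z hz => Finset.le_sup hz) hg hp

end FreeGroup

section RootClass

variable {G : Type*} [Group G] (H : Subgroup G)

theorem relOrd_dvd_of_pow_mem {g : G} {k : ℕ} (hk : 1 ≤ k) (hg : g ^ k ∈ H) :
    relOrd H g ∣ k := by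
  obtain ⟨hd, hgd⟩ : 1 ≤ relOrd H g ∧ g ^ relOrd H g ∈ H :=
    Nat.sInf_mem (⟨k, hk, hg⟩ : {m | 1 ≤ m ∧ g ^ m ∈ H}.Nonempty)
  set d := relOrd H g
  have hmod : g ^ (k % d) ∈ H := by
    have : g ^ (k % d) = ((g ^ d) ^ (k / d))⁻¹ * g ^ k := by
      rw [← pow_mul, eq_inv_mul_iff_mul_eq, ← pow_add, Nat.div_add_mod]
    rw [this]
    exact H.mul_mem (H.inv_mem (H.pow_mem hgd _)) hg
  refine Nat.dvd_of_mod_eq_zero (Nat.eq_zero_of_not_pos fun hpos => ?_)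
  exact (Nat.mod_lt k hd).not_ge (Nat.sInf_le ⟨hpos, hmod⟩)

/-- The `H`-conjugates of the coset `(H ∩ H^w ∩ ⋯ ∩ H^{w^{k-1}}) w`; note `y ∈ H^{w^j}` iff
`w ^ j * y * (w ^ j)⁻¹ ∈ H`. -/
def rootClass (k : ℕ) (w : G) : Set G :=
  {g | ∃ y, (∀ j < k, w ^ j * y * (w ^ j)⁻¹ ∈ H) ∧ ∃ h ∈ H, g = h⁻¹ * (y * w) * h}

variable {H}

theorem mem_rootClass_iff {k : ℕ} {w g : G} :
    g ∈ rootClass H k w ↔ ∃ x ∈ H, ∀ j ≤ k, g ^ j * x * (w ^ j)⁻¹ ∈ H := by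
  constructor
  · rintro ⟨y, hy, h, hh, rfl⟩
    have hyw : ∀ j ≤ k, (y * w) ^ j * (w ^ j)⁻¹ ∈ H := by
      intro j hj
      induction j with
      | zero => simp
      | succ j ih =>
        have : (y * w) ^ (j + 1) * (w ^ (j + 1))⁻¹ =
            (y * w) ^ j * (w ^ j)⁻¹ * (w ^ j * y * (w ^ j)⁻¹) := by
          rw [pow_succ, pow_succ]; group
        rw [this]
        exact H.mul_mem (ih (by omega)) (hy j (by omega))
    refine ⟨h⁻¹, H.inv_mem hh, fun j hj => ?_⟩
    have : (h⁻¹ * (y * w) * h) ^ j * h⁻¹ * (w ^ j)⁻¹ = h⁻¹ * ((y * w) ^ j * (w ^ j)⁻¹) := by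
      have hconj := conj_pow (a := h⁻¹) (b := y * w) (i := j)
      rw [inv_inv] at hconj
      rw [hconj]; group
    rw [this]
    exact H.mul_mem (H.inv_mem hh) (hyw j hj)
  · rintro ⟨x, hx, hgx⟩
    refine ⟨x⁻¹ * g * x * w⁻¹, fun j hj => ?_, x⁻¹, H.inv_mem hx, by group⟩
    have : w ^ j * (x⁻¹ * g * x * w⁻¹) * (w ^ j)⁻¹ =
        (g ^ j * x * (w ^ j)⁻¹)⁻¹ * (g ^ (j + 1) * x * (w ^ (j + 1))⁻¹) := by
      rw [pow_succ, pow_succ]; group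
    rw [this]
    exact H.mul_mem (H.inv_mem (hgx j hj.le)) (hgx (j + 1) hj)

theorem pow_mem_of_mem_rootClass {k : ℕ} {w g : G} (hw : w ^ k ∈ H)
    (hg : g ∈ rootClass H k w) : g ^ k ∈ H := by
  obtain ⟨x, hx, hgx⟩ := mem_rootClass_iff.mp hg
  have : g ^ k = g ^ k * x * (w ^ k)⁻¹ * w ^ k * x⁻¹ := by group
  rw [this]
  exact H.mul_mem (H.mul_mem (hgx k le_rfl) hw) (H.inv_mem hx)

theorem exists_finite_rootClass_cover {R : Set G} (hR : R.Finite) {k : ℕ}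
    (hcov : ∀ g, g ^ k ∈ H → ∃ u, ∀ j ≤ k, ∃ r ∈ R, g ^ j * u * r⁻¹ ∈ H) :
    ∃ W : Set G, W.Finite ∧ (∀ w ∈ W, w ^ k ∈ H) ∧
      {g | g ^ k ∈ H} = ⋃ w ∈ W, rootClass H k w := by
  choose! u r hrR hr using hcov
  let roots := {g : G | g ^ k ∈ H}
  -- `sig g` records the right cosets `H * (g ^ j * u g)`, `j ≤ k`, through representatives in `R`
  let sig (g : G) (j : Fin (k + 1)) : G := r g j
  obtain ⟨W, hWroots, hbij⟩ := Set.exists_subset_bijOn roots sig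
  have hsig : (sig '' roots).Finite :=
    (Set.Finite.pi fun _ => hR).subset fun _ ⟨g, hg, hσ⟩ => hσ ▸ fun j _ => hrR g hg j j.is_le
  refine ⟨W, Set.Finite.of_finite_image (hbij.image_eq ▸ hsig) hbij.injOn, hWroots,
    Set.Subset.antisymm (fun g hg => ?_)
      (Set.iUnion₂_subset fun w hw => fun g => pow_mem_of_mem_rootClass (hWroots hw))⟩
  obtain ⟨w, hw, hwg⟩ := hbij.surjOn ⟨g, hg, rfl⟩
  have hgw : ∀ j ≤ k, g ^ j * (u g * (u w)⁻¹) * (w ^ j)⁻¹ ∈ H := by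
    intro j hj
    have hrj : r w j = r g j := congrFun hwg ⟨j, Nat.lt_succ_of_le hj⟩
    have : g ^ j * (u g * (u w)⁻¹) * (w ^ j)⁻¹ =
        (g ^ j * u g * (r g j)⁻¹) * (w ^ j * u w * (r w j)⁻¹)⁻¹ := by
      rw [hrj]; group
    rw [this]
    exact H.mul_mem (hr g hg j hj) (H.inv_mem (hr w (hWroots hw) j hj))
  exact Set.mem_biUnion hw <| mem_rootClass_iff.mpr
    ⟨_, by simpa using hgw 0 (Nat.zero_le k), hgw⟩

end RootClass

open FreeGroup in
/-- Description of the set of `k`-roots of a finitely generated subgroup `H` of a free group of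
finite rank: it is the union, over finitely many elements `w₀ = 1, w₁, …, w_t` whose relative
order in `H` divides `k`, of the `H`-conjugates of the cosets
`(H ∩ H^{wᵢ} ∩ ⋯ ∩ H^{wᵢ^{k-1}}) wᵢ`. -/
theorem kRoots_description (n : ℕ) (H : Subgroup (FreeGroup (Fin n))) (hH : H.FG)
    (k : ℕ) (hk : 1 ≤ k) :
    ∃ (t : ℕ) (w : Fin (t + 1) → FreeGroup (Fin n)),
      w 0 = 1 ∧ (∀ i, relOrd H (w i) ∣ k) ∧
      {g : FreeGroup (Fin n) | g ^ k ∈ H} =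
        ⋃ i : Fin (t + 1), {g : FreeGroup (Fin n) |
          ∃ y : FreeGroup (Fin n),
            (∀ j : ℕ, j < k → (w i) ^ j * y * ((w i) ^ j)⁻¹ ∈ H) ∧
            ∃ h ∈ H, g = h⁻¹ * (y * w i) * h} := by
  obtain ⟨B, hB⟩ := exists_forall_pow_mul_inv_mem_of_fg hH
  obtain ⟨W, hWfin, hWroots, hcover⟩ :=
    exists_finite_rootClass_cover (finite_setOf_norm_le B) (hB (Nat.one_le_iff_ne_zero.mp hk))
  obtain ⟨t, e, rfl⟩ := hWfin.fin_embedding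
  let w : Fin (t + 1) → FreeGroup (Fin n) := Fin.cons 1 e
  have hpow : ∀ i, w i ^ k ∈ H := Fin.cases (by simp [w]) fun i => hWroots _ ⟨i, rfl⟩
  refine ⟨t, w, rfl, fun i => relOrd_dvd_of_pow_mem H hk (hpow i), ?_⟩
  have hone : rootClass H k 1 ⊆ {g | g ^ k ∈ H} := fun g => pow_mem_of_mem_rootClass (by simp)
  calc {g | g ^ k ∈ H} = ⋃ v ∈ insert 1 (Set.range e), rootClass H k v := by
        rw [Set.biUnion_insert, hcover, Set.union_eq_right.mpr (hcover ▸ hone)]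
    _ = ⋃ i, rootClass H k (w i) := by rw [← Fin.range_cons, Set.biUnion_range]
end

section
/- Let F be a free group of finite rank, let H be a finitely generated subgroup of F, and let S ⊆ ℕ be a set of strictly positive integers. Then the S-pure closure of H, i.e. the intersection of all S-pure subgroups of F containing H, is itself S-pure and finitely generated. -/
namespace SPureProof

open FreeGroup List

variable {n : ℕ}

abbrev Letter (n : ℕ) := Fin n × Bool

def invL (l : Letter n) : Letter n := (l.1, !l.2)

@[simp] lemma invL_invL (l : Letter n) : invL (invL l) = l := by
  simp [invL]

lemma invRev_cons (x : Letter n) (w : List (Letter n)) :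
    invRev (x :: w) = invRev w ++ [invL x] := by
  simp [invRev, invL]

lemma invRev_nil : invRev ([] : List (Letter n)) = [] := rfl

lemma mk_invRev (w : List (Letter n)) : FreeGroup.mk (invRev w) = (FreeGroup.mk w)⁻¹ :=
  (FreeGroup.inv_mk).symm

structure Graph (n : ℕ) where
  V : Type
  base : V
  E : V → Letter n → V → Prop
  symm : ∀ {u l v}, E u l v → E v (invL l) u

inductive Walk (G : Graph n) : G.V → List (Letter n) → G.V → Prop
  | nil (u : G.V) : Walk G u [] u
  | cons {u l v w x} : G.E u l v → Walk G v w x → Walk G u (l :: w) x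

namespace Walk

lemma append {G : Graph n} {u v x : G.V} {w₁ w₂ : List (Letter n)}
    (h₁ : Walk G u w₁ v) (h₂ : Walk G v w₂ x) : Walk G u (w₁ ++ w₂) x := by
  induction h₁ with
  | nil => simpa
  | cons e _ ih => exact Walk.cons e (ih h₂)

lemma split {G : Graph n} {u x : G.V} {w₁ w₂ : List (Letter n)}
    (h : Walk G u (w₁ ++ w₂) x) : ∃ v, Walk G u w₁ v ∧ Walk G v w₂ x := by
  induction w₁ generalizing u with
  | nil => exact ⟨u, Walk.nil u, h⟩
  | cons l w₁ ih =>
    cases h with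
    | cons e h' =>
      obtain ⟨v, hv, hx⟩ := ih h'
      exact ⟨v, Walk.cons e hv, hx⟩

lemma reverse {G : Graph n} {u v : G.V} {w : List (Letter n)}
    (h : Walk G u w v) : Walk G v (invRev w) u := by
  induction h with
  | nil => exact Walk.nil _
  | cons e _ ih =>
    rw [invRev_cons]
    exact ih.append (Walk.cons (G.symm e) (Walk.nil _))

end Walk

/-- The subgroup of loop labels at the base point. -/
def lang (G : Graph n) : Subgroup (FreeGroup (Fin n)) where
  carrier := {g | ∃ w, Walk G G.base w G.base ∧ FreeGroup.mk w = g}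
  one_mem' := ⟨[], Walk.nil _, rfl⟩
  mul_mem' := by
    rintro a b ⟨w₁, h₁, rfl⟩ ⟨w₂, h₂, rfl⟩
    exact ⟨w₁ ++ w₂, h₁.append h₂, (FreeGroup.mul_mk).symm⟩
  inv_mem' := by
    rintro a ⟨w, h, rfl⟩
    exact ⟨invRev w, h.reverse, mk_invRev w⟩

lemma mem_lang_iff {G : Graph n} {g : FreeGroup (Fin n)} :
    g ∈ lang G ↔ ∃ w, Walk G G.base w G.base ∧ FreeGroup.mk w = g := Iff.rfl

def Det (G : Graph n) : Prop :=
  ∀ {u l v v'}, G.E u l v → G.E u l v' → v = v'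

def Reach (G : Graph n) : Prop :=
  ∀ v : G.V, ∃ w, Walk G G.base w v

/-- In a deterministic graph, walks are stable under word reduction. -/
lemma walk_red {G : Graph n} (hG : Det G) {u v : G.V} {w w' : List (Letter n)}
    (hred : FreeGroup.Red w w') (h : Walk G u w v) : Walk G u w' v := by
  induction hred with
  | refl => exact h
  | tail _ step ih =>
    cases step with
    | @not L₁ L₂ x b =>
      obtain ⟨a, ha, hrest⟩ := Walk.split ih
      cases hrest with
      | cons e₁ htail =>
        cases htail with
        | cons e₂ htail' =>
          rename_i m m'
          have hsymm : G.E m (x, !b) a := by simpa [invL] using G.symm e₁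
          cases hG e₂ hsymm
          exact ha.append htail'

lemma walk_reduce {G : Graph n} (hG : Det G) {u v : G.V} {w : List (Letter n)}
    (h : Walk G u w v) : Walk G u (FreeGroup.reduce w) v :=
  walk_red hG (FreeGroup.reduce.red) h

lemma toWord_walk {G : Graph n} (hG : Det G) {g : FreeGroup (Fin n)} (hg : g ∈ lang G) :
    Walk G G.base g.toWord G.base := by
  obtain ⟨w, hw, rfl⟩ := hg
  rw [FreeGroup.toWord_mk]
  exact walk_reduce hG hw

/-- Generation: loops lie in the subgroup generated by "edge generators" relative to
any choice of access paths. -/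
lemma lang_le_of_paths {G : Graph n} (p : G.V → List (Letter n))
    (hp : ∀ v, Walk G G.base (p v) v) (hbase : p G.base = [])
    (T : Subgroup (FreeGroup (Fin n)))
    (hT : ∀ u l v, G.E u l v →
      FreeGroup.mk (p u) * FreeGroup.mk [l] * (FreeGroup.mk (p v))⁻¹ ∈ T) :
    lang G ≤ T := by
  have aux : ∀ (w : List (Letter n)) (u v : G.V), Walk G u w v →
      FreeGroup.mk (p u) * FreeGroup.mk w * (FreeGroup.mk (p v))⁻¹ ∈ T := by
    intro w
    induction w with
    | nil =>
      intro u v h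
      cases h
      have heq : FreeGroup.mk (p u) * FreeGroup.mk [] * (FreeGroup.mk (p u))⁻¹ = 1 := by
        rw [show (FreeGroup.mk [] : FreeGroup (Fin n)) = 1 from FreeGroup.one_eq_mk.symm]
        group
      rw [heq]
      exact one_mem T
    | cons l w ih =>
      intro u v h
      cases h with
      | @cons _ _ m _ _ e h' =>
        have h1 := hT u l m e
        have h2 := ih m v h'
        have key : FreeGroup.mk (p u) * FreeGroup.mk (l :: w) * (FreeGroup.mk (p v))⁻¹ =
            (FreeGroup.mk (p u) * FreeGroup.mk [l] * (FreeGroup.mk (p m))⁻¹) *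
            (FreeGroup.mk (p m) * FreeGroup.mk w * (FreeGroup.mk (p v))⁻¹) := by
          have : FreeGroup.mk (l :: w) = FreeGroup.mk [l] * FreeGroup.mk w := by
            rw [FreeGroup.mul_mk]; rfl
          rw [this]; group
        rw [key]
        exact mul_mem h1 h2
  rintro g ⟨w, hw, rfl⟩
  have h := aux w G.base G.base hw
  rw [hbase, show (FreeGroup.mk [] : FreeGroup (Fin n)) = 1 from FreeGroup.one_eq_mk.symm,
    one_mul, inv_one, mul_one] at h
  exact h

lemma lang_fg (G : Graph n) (hfin : Finite G.V) (hreach : Reach G) : (lang G).FG := by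
  classical
  haveI := hfin
  -- choose access paths
  have hex : ∀ v : G.V, ∃ w, Walk G G.base w v := hreach
  set p : G.V → List (Letter n) :=
    fun v => if h : v = G.base then [] else Classical.choose (hex v) with hpdef
  have hp : ∀ v, Walk G G.base (p v) v := by
    intro v
    by_cases h : v = G.base
    · subst h; simp [hpdef]; exact Walk.nil _
    · simp only [hpdef, dif_neg h]; exact Classical.choose_spec (hex v)
  have hbase : p G.base = [] := by simp [hpdef]
  set X : Set (FreeGroup (Fin n)) :=
    {x | ∃ u l v, G.E u l v ∧ x = FreeGroup.mk (p u) * FreeGroup.mk [l] * (FreeGroup.mk (p v))⁻¹}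
    with hXdef
  have hXfin : X.Finite := by
    have : X ⊆ (fun t : G.V × Letter n × G.V =>
        FreeGroup.mk (p t.1) * FreeGroup.mk [t.2.1] * (FreeGroup.mk (p t.2.2))⁻¹) '' Set.univ := by
      rintro x ⟨u, l, v, _, rfl⟩
      exact ⟨(u, l, v), Set.mem_univ _, rfl⟩
    exact Set.Finite.subset (Set.Finite.image _ Set.finite_univ) this
  have h1 : lang G ≤ Subgroup.closure X := by
    apply lang_le_of_paths p hp hbase
    intro u l v e
    exact Subgroup.subset_closure ⟨u, l, v, e, rfl⟩
  have h2 : Subgroup.closure X ≤ lang G := by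
    rw [Subgroup.closure_le]
    rintro x ⟨u, l, v, e, rfl⟩
    refine ⟨p u ++ [l] ++ invRev (p v), ?_, ?_⟩
    · exact ((hp u).append (Walk.cons e (Walk.nil _))).append (hp v).reverse
    · rw [← FreeGroup.mul_mk, ← FreeGroup.mul_mk, mk_invRev]
  rw [Subgroup.fg_iff]
  exact ⟨X, le_antisymm h2 h1, hXfin⟩

section Glue

variable (G : Graph n) (B : Set (G.V × G.V))

/-- The congruence generated by the pairs in `B` together with determinism/folding. -/
inductive Rel : G.V → G.V → Prop
  | of {a b} : (a, b) ∈ B → Rel a b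
  | refl (a) : Rel a a
  | symm {a b} : Rel a b → Rel b a
  | trans {a b c} : Rel a b → Rel b c → Rel a c
  | congr {a b l a' b'} : Rel a b → G.E a l a' → G.E b l b' → Rel a' b'

def glueSetoid : Setoid G.V :=
  ⟨Rel G B, ⟨Rel.refl, Rel.symm, Rel.trans⟩⟩

def glue : Graph n where
  V := Quotient (glueSetoid G B)
  base := Quotient.mk (glueSetoid G B) G.base
  E c l d := ∃ u v, G.E u l v ∧ Quotient.mk (glueSetoid G B) u = c ∧
      Quotient.mk (glueSetoid G B) v = d
  symm := by
    rintro c l d ⟨u, v, e, hu, hv⟩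
    exact ⟨v, u, G.symm e, hv, hu⟩

lemma glue_det : Det (glue G B) := by
  rintro c l d d' ⟨u, v, e, hu, hv⟩ ⟨u', v', e', hu', hv'⟩
  have hrel : Rel G B u u' := Quotient.exact (hu.trans hu'.symm)
  have : Rel G B v v' := Rel.congr hrel e e'
  rw [← hv, ← hv']
  exact Quotient.sound this

lemma glue_finite (hfin : Finite G.V) : Finite (glue G B).V := by
  haveI := hfin
  exact Quotient.finite _

lemma walk_glue {u v : G.V} {w : List (Letter n)} (h : Walk G u w v) :
    Walk (glue G B) (Quotient.mk (glueSetoid G B) u) w (Quotient.mk (glueSetoid G B) v) := by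
  induction h with
  | nil => exact Walk.nil _
  | cons e _ ih => exact Walk.cons ⟨_, _, e, rfl, rfl⟩ ih

lemma glue_reach (hreach : Reach G) : Reach (glue G B) := by
  intro c
  induction c using Quotient.ind with
  | _ v =>
    obtain ⟨w, hw⟩ := hreach v
    exact ⟨w, walk_glue G B hw⟩

lemma lang_le_glue : lang G ≤ lang (glue G B) := by
  rintro g ⟨w, hw, rfl⟩
  exact ⟨w, walk_glue G B hw, rfl⟩

lemma glue_pair_mem {a b : G.V} (hab : (a, b) ∈ B) {p q : List (Letter n)}
    (hp : Walk G G.base p a) (hq : Walk G G.base q b) :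
    FreeGroup.mk p * (FreeGroup.mk q)⁻¹ ∈ lang (glue G B) := by
  refine ⟨p ++ invRev q, ?_, by rw [← FreeGroup.mul_mk, mk_invRev]⟩
  have h1 := walk_glue G B hp
  have h2 := (walk_glue G B hq).reverse
  have : Quotient.mk (glueSetoid G B) a = Quotient.mk (glueSetoid G B) b :=
    Quotient.sound (Rel.of hab)
  rw [this] at h1
  exact h1.append h2

/-- Key bound: the language of the glued graph is contained in any subgroup `T` containing
`lang G` and the "difference elements" of the glued pairs. -/
lemma glue_lang_le (hreach : Reach G) (T : Subgroup (FreeGroup (Fin n)))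
    (hL : lang G ≤ T)
    (hB : ∀ a b, (a, b) ∈ B → ∃ p q, Walk G G.base p a ∧ Walk G G.base q b ∧
      FreeGroup.mk p * (FreeGroup.mk q)⁻¹ ∈ T) :
    lang (glue G B) ≤ T := by
  -- loops with the same endpoints differ by elements of T
  have loop_mem : ∀ (u : G.V) (p q : List (Letter n)), Walk G G.base p u →
      Walk G G.base q u → FreeGroup.mk p * (FreeGroup.mk q)⁻¹ ∈ T := by
    intro u p q hp hq
    apply hL
    refine ⟨p ++ invRev q, hp.append hq.reverse, by rw [← FreeGroup.mul_mk, mk_invRev]⟩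
  have rel_imp : ∀ {a b}, Rel G B a b → ∃ p q, Walk G G.base p a ∧ Walk G G.base q b ∧
      FreeGroup.mk p * (FreeGroup.mk q)⁻¹ ∈ T := by
    intro a b hab
    induction hab with
    | of h => exact hB _ _ h
    | refl a =>
      obtain ⟨p, hp⟩ := hreach a
      refine ⟨p, p, hp, hp, ?_⟩
      rw [mul_inv_cancel]
      exact one_mem T
    | symm _ ih =>
      obtain ⟨p, q, hp, hq, hmem⟩ := ih
      refine ⟨q, p, hq, hp, ?_⟩
      have : FreeGroup.mk q * (FreeGroup.mk p)⁻¹ =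
          (FreeGroup.mk p * (FreeGroup.mk q)⁻¹)⁻¹ := by group
      rw [this]; exact inv_mem hmem
    | trans _ _ ih₁ ih₂ =>
      obtain ⟨p, q, hp, hq, hm₁⟩ := ih₁
      obtain ⟨q', r, hq', hr, hm₂⟩ := ih₂
      refine ⟨p, r, hp, hr, ?_⟩
      have hmid := loop_mem _ q q' hq hq'
      have : FreeGroup.mk p * (FreeGroup.mk r)⁻¹ =
          (FreeGroup.mk p * (FreeGroup.mk q)⁻¹) * (FreeGroup.mk q * (FreeGroup.mk q')⁻¹) *
          (FreeGroup.mk q' * (FreeGroup.mk r)⁻¹) := by group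
      rw [this]; exact mul_mem (mul_mem hm₁ hmid) hm₂
    | @congr a b l a' b' _ e₁ e₂ ih =>
      obtain ⟨p, q, hp, hq, hmem⟩ := ih
      refine ⟨p ++ [l], q ++ [l], hp.append (Walk.cons e₁ (Walk.nil _)),
        hq.append (Walk.cons e₂ (Walk.nil _)), ?_⟩
      have : FreeGroup.mk (p ++ [l]) * (FreeGroup.mk (q ++ [l]))⁻¹ =
          FreeGroup.mk p * (FreeGroup.mk q)⁻¹ := by
        rw [← FreeGroup.mul_mk, ← FreeGroup.mul_mk]; group
      rw [this]; exact hmem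
  -- main invariant along quotient walks
  have main : ∀ (w : List (Letter n)) (c c' : (glue G B).V), Walk (glue G B) c w c' →
      ∀ (u : G.V) (p : List (Letter n)), Quotient.mk (glueSetoid G B) u = c →
      Walk G G.base p u → ∃ (u' : G.V) (p' : List (Letter n)),
        Quotient.mk (glueSetoid G B) u' = c' ∧ Walk G G.base p' u' ∧
        FreeGroup.mk p * FreeGroup.mk w * (FreeGroup.mk p')⁻¹ ∈ T := by
    intro w
    induction w with
    | nil =>
      intro c c' h u p hu hp
      cases h
      refine ⟨u, p, hu, hp, ?_⟩
      have : FreeGroup.mk p * FreeGroup.mk [] * (FreeGroup.mk p)⁻¹ = 1 := by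
        rw [show (FreeGroup.mk [] : FreeGroup (Fin n)) = 1 from FreeGroup.one_eq_mk.symm]
        group
      rw [this]; exact one_mem T
    | cons l w ih =>
      intro c c' h u p hu hp
      cases h with
      | cons e h' =>
        obtain ⟨a, b, eab, ha, hb⟩ := e
        have hrel : Rel G B a u := Quotient.exact (ha.trans hu.symm)
        obtain ⟨pa, pu, hpa, hpu, hm⟩ := rel_imp hrel
        have hpap : FreeGroup.mk pa * (FreeGroup.mk p)⁻¹ ∈ T := by
          have h2 := loop_mem u pu p hpu hp
          have : FreeGroup.mk pa * (FreeGroup.mk p)⁻¹ =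
              (FreeGroup.mk pa * (FreeGroup.mk pu)⁻¹) *
              (FreeGroup.mk pu * (FreeGroup.mk p)⁻¹) := by group
          rw [this]; exact mul_mem hm h2
        have hwalkb : Walk G G.base (pa ++ [l]) b := hpa.append (Walk.cons eab (Walk.nil _))
        obtain ⟨u', p', hu', hp', hmem⟩ := ih _ c' h' b (pa ++ [l]) hb hwalkb
        refine ⟨u', p', hu', hp', ?_⟩
        have key : FreeGroup.mk p * FreeGroup.mk (l :: w) * (FreeGroup.mk p')⁻¹ =
            (FreeGroup.mk pa * (FreeGroup.mk p)⁻¹)⁻¹ *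
            (FreeGroup.mk (pa ++ [l]) * FreeGroup.mk w * (FreeGroup.mk p')⁻¹) := by
          rw [← FreeGroup.mul_mk, show FreeGroup.mk (l :: w) =
            FreeGroup.mk [l] * FreeGroup.mk w by rw [FreeGroup.mul_mk]; rfl]
          group
        rw [key]
        exact mul_mem (inv_mem hpap) hmem
  rintro g ⟨w, hw, rfl⟩
  obtain ⟨u', p', hu', hp', hmem⟩ := main w _ _ hw G.base [] rfl (Walk.nil _)
  have hrel : Rel G B u' G.base := Quotient.exact hu'
  obtain ⟨pa, pb, hpa, hpb, hm⟩ := rel_imp hrel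
  have h1 : FreeGroup.mk p' * (FreeGroup.mk pa)⁻¹ ∈ T := loop_mem u' p' pa hp' hpa
  have h2 : FreeGroup.mk pb ∈ T := by
    apply hL
    exact ⟨pb, hpb, rfl⟩
  have key : FreeGroup.mk w =
      (FreeGroup.mk [] * FreeGroup.mk w * (FreeGroup.mk p')⁻¹) *
      (FreeGroup.mk p' * (FreeGroup.mk pa)⁻¹) *
      (FreeGroup.mk pa * (FreeGroup.mk pb)⁻¹) * FreeGroup.mk pb := by
    rw [show (FreeGroup.mk [] : FreeGroup (Fin n)) = 1 from FreeGroup.one_eq_mk.symm]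
    group
  rw [key]
  exact mul_mem (mul_mem (mul_mem hmem h1) hm) h2

end Glue

section Initial

variable (S₀ : Finset (FreeGroup (Fin n)))

def Pref (w : List (Letter n)) : Prop := w = [] ∨ ∃ g ∈ S₀, w <+: FreeGroup.toWord g

lemma pref_finite : {w : List (Letter n) | Pref S₀ w}.Finite := by
  have : {w : List (Letter n) | Pref S₀ w} =
      insert [] (⋃ g ∈ (S₀ : Set (FreeGroup (Fin n))), {w | w <+: FreeGroup.toWord g}) := by
    ext w
    simp [Pref, Set.mem_iUnion]
  rw [this]
  refine Set.Finite.insert _ (Set.Finite.biUnion S₀.finite_toSet ?_)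
  intro g _
  refine Set.Finite.ofFinset (FreeGroup.toWord g).inits.toFinset ?_
  intro w
  simp [List.mem_inits]

def initBaseE (u : {w : List (Letter n) // Pref S₀ w}) (l : Letter n)
    (v : {w : List (Letter n) // Pref S₀ w}) : Prop :=
  (↑v = ↑u ++ [l]) ∨ (∃ g ∈ S₀, ↑u ++ [l] = FreeGroup.toWord g ∧ (↑v : List (Letter n)) = [])

def initGraph : Graph n where
  V := {w : List (Letter n) // Pref S₀ w}
  base := ⟨[], Or.inl rfl⟩
  E u l v := initBaseE S₀ u l v ∨ initBaseE S₀ v (invL l) u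
  symm := by
    rintro u l v (h | h)
    · right; rwa [invL_invL]
    · exact Or.inl h

lemma initGraph_finite : Finite (initGraph S₀).V :=
  (pref_finite S₀).to_subtype

lemma init_walk : ∀ (w : List (Letter n)) (h : Pref S₀ w),
    Walk (initGraph S₀) (initGraph S₀).base w ⟨w, h⟩ := by
  intro w
  induction w using List.reverseRecOn with
  | nil =>
    intro h
    exact Walk.nil _
  | append_singleton w l ih =>
    intro h
    have hw : Pref S₀ w := by
      rcases h with h | ⟨g, hg, pre⟩
      · simp at h
      · exact Or.inr ⟨g, hg, ((w.prefix_append [l]).trans pre)⟩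
    have hedge : (initGraph S₀).E ⟨w, hw⟩ l ⟨w ++ [l], h⟩ := Or.inl (Or.inl rfl)
    exact (ih hw).append (Walk.cons hedge (Walk.nil _))

lemma initGraph_reach : Reach (initGraph S₀) := by
  rintro ⟨w, h⟩
  exact ⟨w, init_walk S₀ w h⟩

lemma initGraph_lang : lang (initGraph S₀) = Subgroup.closure (S₀ : Set (FreeGroup (Fin n))) := by
  apply _root_.le_antisymm
  · apply lang_le_of_paths (G := initGraph S₀)
      (fun v : {w : List (Letter n) // Pref S₀ w} => v.1)
      (fun v => init_walk S₀ v.1 v.2) rfl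
    rintro ⟨u, hu⟩ l ⟨v, hv⟩ e
    have hinv : FreeGroup.mk [invL l] = (FreeGroup.mk [l])⁻¹ := by
      rw [FreeGroup.inv_mk]
      congr 1
    rcases e with (h | ⟨g, hg, heq, hve⟩) | (h | ⟨g, hg, heq, hue⟩)
    · replace h : v = u ++ [l] := h
      have : FreeGroup.mk u * FreeGroup.mk [l] * (FreeGroup.mk v)⁻¹ = 1 := by
        rw [h, ← FreeGroup.mul_mk]
        group
      show FreeGroup.mk u * FreeGroup.mk [l] * (FreeGroup.mk v)⁻¹ ∈ _
      rw [this]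
      exact one_mem _
    · replace heq : u ++ [l] = FreeGroup.toWord g := heq
      replace hve : v = [] := hve
      have : FreeGroup.mk u * FreeGroup.mk [l] * (FreeGroup.mk v)⁻¹ = g := by
        rw [hve, FreeGroup.mul_mk, heq, FreeGroup.mk_toWord,
          show (FreeGroup.mk [] : FreeGroup (Fin n)) = 1 from FreeGroup.one_eq_mk.symm]
        group
      show FreeGroup.mk u * FreeGroup.mk [l] * (FreeGroup.mk v)⁻¹ ∈ _
      rw [this]
      exact Subgroup.subset_closure hg
    · replace h : u = v ++ [invL l] := h
      have : FreeGroup.mk u * FreeGroup.mk [l] * (FreeGroup.mk v)⁻¹ = 1 := by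
        rw [h, ← FreeGroup.mul_mk, hinv]
        group
      show FreeGroup.mk u * FreeGroup.mk [l] * (FreeGroup.mk v)⁻¹ ∈ _
      rw [this]
      exact one_mem _
    · replace heq : v ++ [invL l] = FreeGroup.toWord g := heq
      replace hue : u = [] := hue
      have hg' : FreeGroup.mk v * (FreeGroup.mk [l])⁻¹ = g := by
        rw [← hinv, FreeGroup.mul_mk, heq]
        exact FreeGroup.mk_toWord
      have : FreeGroup.mk u * FreeGroup.mk [l] * (FreeGroup.mk v)⁻¹ = g⁻¹ := by
        rw [hue, ← hg',
          show (FreeGroup.mk [] : FreeGroup (Fin n)) = 1 from FreeGroup.one_eq_mk.symm]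
        group
      show FreeGroup.mk u * FreeGroup.mk [l] * (FreeGroup.mk v)⁻¹ ∈ _
      rw [this]
      exact inv_mem (Subgroup.subset_closure hg)
  · rw [Subgroup.closure_le]
    intro g hg
    rcases List.eq_nil_or_concat (FreeGroup.toWord g) with hnil | ⟨w, l, heq⟩
    · have : g = 1 := FreeGroup.toWord_eq_nil_iff.mp hnil
      rw [this]; exact one_mem _
    · rw [List.concat_eq_append] at heq
      have hw : Pref S₀ w := Or.inr ⟨g, hg, heq ▸ w.prefix_append [l]⟩
      have hedge : (initGraph S₀).E ⟨w, hw⟩ l (initGraph S₀).base :=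
        Or.inl (Or.inr ⟨g, hg, heq.symm, rfl⟩)
      refine ⟨FreeGroup.toWord g, ?_, FreeGroup.mk_toWord⟩
      rw [heq]
      exact (init_walk S₀ w hw).append (Walk.cons hedge (Walk.nil _))

end Initial

section Words

def RedPair (a b : Letter n) : Prop := a.1 = b.1 ∧ a.2 = !b.2

def Reduced (w : List (Letter n)) : Prop := List.Chain' (fun a b => ¬ RedPair a b) w

lemma not_redPair_self (a : Letter n) : ¬ RedPair a a := by
  simp [RedPair]

lemma reduced_reduce (w : List (Letter n)) : Reduced (FreeGroup.reduce w) := by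
  induction w with
  | nil => exact List.isChain_nil
  | cons x w ih =>
    rw [FreeGroup.reduce.cons]
    rcases h : FreeGroup.reduce w with - | ⟨hd, tl⟩
    · exact List.isChain_singleton x
    · rw [h] at ih
      dsimp only
      split_ifs with hcond
      · exact ih.tail
      · exact List.isChain_cons_cons.mpr ⟨fun hc => hcond ⟨hc.1, hc.2⟩, ih⟩

lemma reduce_eq_self {w : List (Letter n)} (h : Reduced w) : FreeGroup.reduce w = w := by
  induction w with
  | nil => rfl
  | cons x w ih =>
    have hw : Reduced w := h.tail
    rw [FreeGroup.reduce.cons, ih hw]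
    cases w with
    | nil => rfl
    | cons hd tl =>
      dsimp only
      rw [if_neg]
      exact fun hc => (List.isChain_cons_cons.mp h).1 ⟨hc.1, hc.2⟩

lemma toWord_reduced (x : FreeGroup (Fin n)) : Reduced (FreeGroup.toWord x) := by
  rw [← FreeGroup.reduce_toWord x]
  exact reduced_reduce _

/-- cyclic reduction decomposition -/
lemma cyc_split : ∀ (N : ℕ) (w : List (Letter n)), w.length ≤ N → Reduced w →
    ∃ u c, w = u ++ c ++ invRev u ∧ Reduced c ∧
      (∀ a ∈ c.getLast?, ∀ b ∈ c.head?, ¬ RedPair a b) := by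
  intro N
  induction N with
  | zero =>
    intro w hlen _
    have : w = [] := List.length_eq_zero_iff.mp (Nat.le_zero.mp hlen)
    subst this
    exact ⟨[], [], rfl, List.isChain_nil, by simp⟩
  | succ N ih =>
    intro w hlen hred
    rcases w with - | ⟨x, w'⟩
    · exact ⟨[], [], rfl, List.isChain_nil, by simp⟩
    rcases List.eq_nil_or_concat w' with rfl | ⟨mid, y, rfl⟩
    · refine ⟨[], [x], by simp [invRev_nil], List.isChain_singleton x, ?_⟩
      intro a ha b hb
      simp only [List.getLast?_singleton, Option.mem_some_iff] at ha
      simp only [List.head?_cons, Option.mem_some_iff] at hb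
      subst ha; subst hb
      exact not_redPair_self x
    rw [List.concat_eq_append] at *
    by_cases hc : RedPair y x
    · have hy : y = invL x := by
        obtain ⟨y1, y2⟩ := y
        obtain ⟨x1, x2⟩ := x
        obtain ⟨h1, h2⟩ := hc
        simp only at h1 h2
        simp [invL, h1, h2]
      have hmidred : Reduced mid := by
        have h1 : Reduced (mid ++ [y]) := hred.tail
        exact (List.isChain_append.mp h1).1
      have hmidlen : mid.length ≤ N := by
        simp only [List.length_cons, List.length_append, List.length_singleton] at hlen
        omega
      obtain ⟨u, c, heq, hcred, hcyc⟩ := ih mid hmidlen hmidred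
      refine ⟨x :: u, c, ?_, hcred, hcyc⟩
      rw [invRev_cons, hy, heq]
      simp [List.append_assoc]
    · refine ⟨[], x :: (mid ++ [y]), by simp [invRev_nil], hred, ?_⟩
      intro a ha b hb
      have hlast : (x :: (mid ++ [y])).getLast? = some y := by
        rw [show x :: (mid ++ [y]) = (x :: mid) ++ [y] from rfl, List.getLast?_append]
        rfl
      rw [hlast, Option.mem_some_iff] at ha
      simp only [List.head?_cons, Option.mem_some_iff] at hb
      subst ha; subst hb
      exact hc

def cpow (s : ℕ) (c : List (Letter n)) : List (Letter n) := (List.replicate s c).flatten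

lemma mk_cpow (s : ℕ) (c : List (Letter n)) :
    FreeGroup.mk (cpow s c) = (FreeGroup.mk c) ^ s := (FreeGroup.pow_mk s).symm

lemma cpow_succ (s : ℕ) (c : List (Letter n)) : cpow (s + 1) c = c ++ cpow s c := by
  simp [cpow, List.replicate_succ]

lemma cpow_nil (s : ℕ) : cpow s ([] : List (Letter n)) = [] := by
  induction s with
  | zero => rfl
  | succ s' ih => rw [cpow_succ, ih]; rfl

lemma head?_cpow {c : List (Letter n)} (s : ℕ) (hs : 1 ≤ s) :
    (cpow s c).head? = c.head? := by
  rcases eq_or_ne c [] with rfl | hc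
  · rw [cpow_nil]
  · obtain ⟨s', rfl⟩ := Nat.exists_eq_add_of_le hs
    rw [show 1 + s' = s' + 1 by omega, cpow_succ, List.head?_append]
    cases c with
    | nil => exact absurd rfl hc
    | cons a c' => simp

lemma cpow_ne_nil {c : List (Letter n)} (hc : c ≠ []) (s : ℕ) (hs : 1 ≤ s) :
    cpow s c ≠ [] := by
  obtain ⟨s', rfl⟩ := Nat.exists_eq_add_of_le hs
  rw [show 1 + s' = s' + 1 by omega, cpow_succ]
  simp [hc]

lemma getLast?_cpow {c : List (Letter n)} (s : ℕ) (hs : 1 ≤ s) :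
    (cpow s c).getLast? = c.getLast? := by
  induction s with
  | zero => omega
  | succ s' ih =>
    rcases Nat.eq_or_lt_of_le hs with h | h
    · rw [← h]
      simp [cpow]
    · have hs' : 1 ≤ s' := by omega
      rw [cpow_succ, List.getLast?_append, ih hs', Option.or_self]

lemma reduced_cpow {c : List (Letter n)} (hcred : Reduced c)
    (hcyc : ∀ a ∈ c.getLast?, ∀ b ∈ c.head?, ¬ RedPair a b) (s : ℕ) :
    Reduced (cpow s c) := by
  induction s with
  | zero => exact List.isChain_nil
  | succ s' ih =>
    rw [cpow_succ]
    refine List.isChain_append.mpr ⟨hcred, ih, ?_⟩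
    intro a ha b hb
    rcases Nat.eq_zero_or_pos s' with rfl | hpos
    · simp [cpow] at hb
    · rw [head?_cpow s' hpos] at hb
      exact hcyc a ha b hb

lemma reduced_conj_cpow {u c : List (Letter n)} (hred : Reduced (u ++ c ++ invRev u))
    (hcyc : ∀ a ∈ c.getLast?, ∀ b ∈ c.head?, ¬ RedPair a b) (hc : c ≠ [])
    (s : ℕ) (hs : 1 ≤ s) : Reduced (u ++ cpow s c ++ invRev u) := by
  have h1 := List.isChain_append.mp hred
  have h2 := List.isChain_append.mp h1.1
  have hulast : ∀ a ∈ u.getLast?, ∀ b ∈ (cpow s c).head?, ¬ RedPair a b := by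
    intro a ha b hb
    rw [head?_cpow s hs] at hb
    exact h2.2.2 a ha b hb
  have hsome : c.getLast?.isSome := List.getLast?_isSome.mpr hc
  have hcplast : (u ++ cpow s c).getLast? = c.getLast? := by
    rw [List.getLast?_append, getLast?_cpow s hs, Option.or_of_isSome hsome]
  have huclast : (u ++ c).getLast? = c.getLast? := by
    rw [List.getLast?_append, Option.or_of_isSome hsome]
  refine List.isChain_append.mpr ⟨List.isChain_append.mpr ⟨h2.1, reduced_cpow h2.2.1 hcyc s, hulast⟩, h1.2.1, ?_⟩
  intro a ha b hb
  rw [hcplast] at ha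
  apply h1.2.2 a _ b hb
  rw [huclast]
  exact ha

end Words

end SPureProof

/-- A subgroup `K` of `G` is `S`-pure if for every `g ∈ G` and `s ∈ S`, `g ^ s ∈ K` implies
`g ∈ K`. -/
def IsSPure {G : Type*} [Group G] (S : Set ℕ) (K : Subgroup G) : Prop :=
  ∀ g : G, ∀ s ∈ S, g ^ s ∈ K → g ∈ K

/-- The `S`-pure closure of `H ≤ G`: the intersection of all `S`-pure subgroups of `G`
containing `H`. -/
def sPureClosure {G : Type*} [Group G] (S : Set ℕ) (H : Subgroup G) : Subgroup G :=
  sInf {K : Subgroup G | H ≤ K ∧ IsSPure S K}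

namespace SPureProof

open FreeGroup List

lemma isSPure_sPureClosure {G : Type*} [Group G] (S : Set ℕ) (H : Subgroup G) :
    IsSPure S (sPureClosure S H) := by
  intro g s hs hgs
  rw [sPureClosure, Subgroup.mem_sInf]
  intro K hK
  apply hK.2 g s hs
  rw [sPureClosure, Subgroup.mem_sInf] at hgs
  exact hgs K hK

lemma le_sPureClosure {G : Type*} [Group G] (S : Set ℕ) (H : Subgroup G) :
    H ≤ sPureClosure S H :=
  le_sInf fun _ hK => hK.1

/-- The main iteration: repeatedly adjoin roots, shrinking the graph each time. -/
lemma iterate (H : Subgroup (FreeGroup (Fin n))) (S : Set ℕ) (hS : ∀ s ∈ S, 1 ≤ s) :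
    ∀ (N : ℕ) (G : Graph n), Finite G.V → Nat.card G.V ≤ N → Det G → Reach G →
      H ≤ lang G → lang G ≤ sPureClosure S H → (sPureClosure S H).FG := by
  intro N
  induction N with
  | zero =>
    intro G hfin hcard _ _ _ _
    haveI := hfin
    haveI : Nonempty G.V := ⟨G.base⟩
    have := Nat.card_pos (α := G.V)
    omega
  | succ N ih =>
    intro G hfin hcard hdet hreach hHle hleCl
    by_cases hpure : IsSPure S (lang G)
    · have h1 : sPureClosure S H ≤ lang G := sInf_le ⟨hHle, hpure⟩
      have h2 : lang G = sPureClosure S H := _root_.le_antisymm hleCl h1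
      rw [← h2]
      exact lang_fg G hfin hreach
    · unfold IsSPure at hpure
      push_neg at hpure
      obtain ⟨x, s, hsS, hxs, hx⟩ := hpure
      have hs1 : 1 ≤ s := hS s hsS
      have hxne : x ≠ 1 := fun h => hx (h ▸ one_mem _)
      have hxCl : x ∈ sPureClosure S H :=
        isSPure_sPureClosure S H x s hsS (hleCl hxs)
      have hwalkpow : Walk G G.base (FreeGroup.toWord (x ^ s)) G.base :=
        toWord_walk hdet hxs
      obtain ⟨u, c, heq, hcred, hcyc⟩ :=
        cyc_split (FreeGroup.toWord x).length (FreeGroup.toWord x) le_rfl (toWord_reduced x)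
      have hxeq : x = FreeGroup.mk u * FreeGroup.mk c * (FreeGroup.mk u)⁻¹ := by
        rw [← mk_invRev, FreeGroup.mul_mk, FreeGroup.mul_mk, ← heq, FreeGroup.mk_toWord]
      have hcne : c ≠ [] := by
        rintro rfl
        apply hxne
        rw [hxeq]
        rw [show (FreeGroup.mk [] : FreeGroup (Fin n)) = 1 from FreeGroup.one_eq_mk.symm]
        group
      have hpowword : FreeGroup.toWord (x ^ s) = u ++ cpow s c ++ invRev u := by
        have hredpow : Reduced (u ++ cpow s c ++ invRev u) :=
          reduced_conj_cpow (heq ▸ toWord_reduced x) hcyc hcne s hs1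
        have hmk : FreeGroup.mk (u ++ cpow s c ++ invRev u) = x ^ s := by
          rw [← FreeGroup.mul_mk, ← FreeGroup.mul_mk, mk_cpow, mk_invRev, hxeq, conj_pow]
        rw [← hmk, FreeGroup.toWord_mk, reduce_eq_self hredpow]
      rw [hpowword] at hwalkpow
      obtain ⟨v₂, hw2, hwinv⟩ := Walk.split hwalkpow
      obtain ⟨v, hwu, hwcpow⟩ := Walk.split hw2
      obtain ⟨s', rfl⟩ : ∃ s', s = s' + 1 := ⟨s - 1, by omega⟩
      rw [cpow_succ] at hwcpow
      obtain ⟨v₁, hwc, _⟩ := Walk.split hwcpow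
      have hvne : v₁ ≠ v := by
        rintro rfl
        apply hx
        refine ⟨u ++ c ++ invRev u, (hwu.append hwc).append hwu.reverse, ?_⟩
        rw [← heq, FreeGroup.mk_toWord]
      set B : Set (G.V × G.V) := {(v₁, v)} with hBdef
      have hglue_le : lang (glue G B) ≤ sPureClosure S H := by
        apply glue_lang_le G B hreach _ hleCl
        rintro a b hab
        rw [hBdef, Set.mem_singleton_iff] at hab
        injection hab with h1 h2
        subst h1; subst h2
        refine ⟨u ++ c, u, hwu.append hwc, hwu, ?_⟩
        rw [← FreeGroup.mul_mk, ← hxeq]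
        exact hxCl
      have hHle' : H ≤ lang (glue G B) := hHle.trans (lang_le_glue G B)
      haveI hfin' : Finite (glue G B).V := glue_finite G B hfin
      have hcard' : Nat.card (glue G B).V ≤ N := by
        haveI := hfin
        haveI : Fintype G.V := Fintype.ofFinite _
        haveI : Finite (Quotient (glueSetoid G B)) := hfin'
        haveI : Fintype (Quotient (glueSetoid G B)) := Fintype.ofFinite _
        have hsurj : Function.Surjective
            (Quotient.mk (glueSetoid G B) : G.V → Quotient (glueSetoid G B)) :=
          fun q => Quot.exists_rep q
        have hninj : ¬ Function.Injective
            (Quotient.mk (glueSetoid G B) : G.V → Quotient (glueSetoid G B)) := by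
          intro hinj
          exact hvne (hinj (Quotient.sound (Rel.of (by rw [hBdef]; rfl))))
        have hlt := Fintype.card_lt_of_surjective_not_injective _ hsurj hninj
        have e1 : Nat.card (glue G B).V = Fintype.card (Quotient (glueSetoid G B)) :=
          Nat.card_eq_fintype_card (α := Quotient (glueSetoid G B))
        have e2 : Nat.card G.V = Fintype.card G.V := Nat.card_eq_fintype_card
        omega
      exact ih (glue G B) hfin' hcard' (glue_det G B) (glue_reach G B hreach)
        hHle' hglue_le

end SPureProof

/-- In a free group of finite rank, the `S`-pure closure of a finitely generated subgroup is
`S`-pure and finitely generated. -/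
theorem sPureClosure_isSPure_and_fg (n : ℕ) (H : Subgroup (FreeGroup (Fin n))) (hH : H.FG)
    (S : Set ℕ) (hS : ∀ s ∈ S, 1 ≤ s) :
    IsSPure S (sPureClosure S H) ∧ (sPureClosure S H).FG := by
  refine ⟨SPureProof.isSPure_sPureClosure S H, ?_⟩
  obtain ⟨S₀, hS₀⟩ := hH
  set G₀ := SPureProof.initGraph S₀ with hG₀
  set G₁ := SPureProof.glue G₀ ∅ with hG₁
  have hlang : SPureProof.lang G₁ = H := by
    apply le_antisymm
    · have hmain := SPureProof.glue_lang_le G₀ ∅ (SPureProof.initGraph_reach S₀)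
        (SPureProof.lang G₀) le_rfl
        (fun a b h => absurd h (Set.notMem_empty _))
      rw [SPureProof.initGraph_lang, hS₀] at hmain
      exact hmain
    · have h2 := SPureProof.lang_le_glue G₀ ∅
      rw [SPureProof.initGraph_lang, hS₀] at h2
      exact h2
  exact SPureProof.iterate H S hS (Nat.card G₁.V) G₁
    (SPureProof.glue_finite _ _ (SPureProof.initGraph_finite S₀)) le_rfl
    (SPureProof.glue_det _ _)
    (SPureProof.glue_reach _ _ (SPureProof.initGraph_reach S₀))
    (hlang.symm.le.trans le_rfl)
    (hlang.le.trans (SPureProof.le_sPureClosure S H))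
end

section
/- Let G = Fₙ × ℤ^m be the direct product of a free group of finite rank n with the free-abelian group ℤ^m, and let H be a finitely generated subgroup of G. Then there exists g ∈ G with Ord_H(g) = 0 (i.e., no positive power of g lies in H) if and only if H has infinite index in G. -/
section RelOrd

variable {G G' : Type*} [Group G] [Group G']

theorem relOrd_eq_zero_iff (H : Subgroup G) (g : G) :
    relOrd H g = 0 ↔ ∀ k, 0 < k → g ^ k ∉ H := by
  simp [relOrd, Nat.sInf_eq_zero, Set.eq_empty_iff_forall_notMem, Nat.one_le_iff_ne_zero,
    Nat.pos_iff_ne_zero]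

theorem relOrd_comap (f : G →* G') (H : Subgroup G') (g : G) :
    relOrd (H.comap f) g = relOrd H (f g) := by
  simp [relOrd, map_pow]

theorem relOrd_eq_zero_of_relOrd_map_eq_zero (f : G →* G') {H : Subgroup G} {g : G}
    (h : relOrd (H.map f) (f g) = 0) : relOrd H g = 0 := by
  rw [relOrd_eq_zero_iff] at h ⊢
  exact fun k hk hgk => h k hk (by simpa [map_pow] using Subgroup.mem_map_of_mem f hgk)

end RelOrd

theorem Subgroup.FG.map {G G' : Type*} [Group G] [Group G'] {H : Subgroup G} (hH : H.FG)
    (f : G →* G') : (H.map f).FG := by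
  classical
  obtain ⟨S, rfl⟩ := hH
  exact ⟨S.image f, by rw [Finset.coe_image, MonoidHom.map_closure]⟩

namespace Subgroup

variable {G : Type*} [Group G]

theorem relIndex_sup_of_normal_right (H N : Subgroup G) [N.Normal] :
    H.relIndex (H ⊔ N) = H.relIndex N := by
  symm
  refine Nat.card_congr (Equiv.ofBijective (quotientSubgroupOfEmbeddingOfLE H le_sup_right)
    ⟨(quotientSubgroupOfEmbeddingOfLE H le_sup_right).injective, ?_⟩)
  intro y
  obtain ⟨⟨x, hx⟩, rfl⟩ := QuotientGroup.mk_surjective y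
  obtain ⟨n, hn, h, hh, rfl⟩ := mem_sup_of_normal_left.mp (sup_comm H N ▸ hx)
  refine ⟨QuotientGroup.mk ⟨n, hn⟩, ?_⟩
  rw [quotientSubgroupOfEmbeddingOfLE_apply_mk, QuotientGroup.eq]
  simpa [mem_subgroupOf] using hh

theorem index_eq_index_map_fst_mul_index_comap_inr {A B : Type*} [Group A] [Group B]
    (H : Subgroup (A × B)) :
    H.index = (H.map (MonoidHom.fst A B)).index * (H.comap (MonoidHom.inr A B)).index := by
  have hrange : (MonoidHom.inr A B).range = (MonoidHom.fst A B).ker := by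
    ext ⟨a, b⟩
    simp [eq_comm, mem_prod]
  rw [index_map, (MonoidHom.fst A B).range_eq_top_of_surjective Prod.fst_surjective, index_top,
    mul_one, index_comap, hrange, ← relIndex_sup_of_normal_right, mul_comm,
    relIndex_mul_index le_sup_left]

theorem exists_mul_inv_notMem_of_index_eq_zero {H : Subgroup G} (hH : H.index = 0) {T : Set G}
    (hT : T.Finite) : ∃ g, ∀ t ∈ T, g * t⁻¹ ∉ H := by
  by_contra! hcover
  refine not_finiteIndex_iff.2 hH
    (finiteIndex_of_leftCoset_cover_const (s := hT.toFinset) (g := (·⁻¹)) ?_)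
  refine Set.eq_univ_of_forall fun x => ?_
  obtain ⟨t, ht, hxt⟩ := hcover x⁻¹
  simp only [Set.mem_iUnion, Set.Finite.mem_toFinset, mem_leftCoset_iff, inv_inv]
  exact ⟨t, ht, by simpa using H.inv_mem hxt⟩

end Subgroup

theorem CommGroup.exists_relOrd_eq_zero_of_index_eq_zero {G : Type*} [CommGroup G] [Group.FG G]
    {H : Subgroup G} (hH : H.index = 0) : ∃ g, relOrd H g = 0 := by
  have hnot : ¬ IsMulTorsion (G ⧸ H) := fun ht =>
    have := CommGroup.finite_of_fg_isMulTorsion (G ⧸ H) ht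
    Subgroup.index_ne_zero_of_finite hH
  obtain ⟨q, hq⟩ := not_forall.mp hnot
  obtain ⟨g, rfl⟩ := QuotientGroup.mk_surjective q
  refine ⟨g, (relOrd_eq_zero_iff H g).2 fun k hk hgk => hq ?_⟩
  refine isOfFinOrder_iff_pow_eq_one.2 ⟨k, hk, ?_⟩
  rwa [← QuotientGroup.mk_pow, QuotientGroup.eq_one_iff]

namespace FreeGroup

variable {α : Type*}

theorem IsReduced.reduce_append_singleton [DecidableEq α] {L : List (α × Bool)}
    (hL : IsReduced L) (a : α × Bool) :
    reduce (L ++ [a]) <+: L ∨ reduce (L ++ [a]) = L ++ [a] := by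
  rcases List.eq_nil_or_concat L with rfl | ⟨L', r, rfl⟩
  · exact Or.inr rfl
  rw [List.concat_eq_append] at hL ⊢
  by_cases hr : r = (a.1, !a.2)
  · left
    have hstep : Red.Step (L' ++ [r] ++ [a]) L' := by
      subst hr
      simpa using Red.Step.not (L₁ := L') (L₂ := []) (x := a.1) (b := !a.2)
    rw [reduce.Step.eq hstep, (hL.infix ⟨[], [r], by simp⟩).reduce_eq]
    exact List.prefix_append _ _
  · right
    refine IsReduced.reduce_eq (IsReduced.append_overlap hL ?_ (List.cons_ne_nil r []))
    rw [List.singleton_append, IsReduced, List.isChain_pair]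
    intro h1
    by_contra h2
    exact hr (Prod.ext h1 (Bool.eq_not.2 h2))

theorem isPrefix_toWord_mul_mk [DecidableEq α] (x : FreeGroup α) (w : List (α × Bool))
    {p : List (α × Bool)} (hp : p <+: (x * mk w).toWord) :
    p <+: x.toWord ∨ ∃ w', w' <+: w ∧ mk p = x * mk w' := by
  induction w using List.reverseRecOn generalizing p with
  | nil => exact Or.inl (by simpa [← one_eq_mk] using hp)
  | append_singleton w a ih =>
    have hword : (x * mk (w ++ [a])).toWord = reduce ((x * mk w).toWord ++ [a]) := by
      rw [← mul_mk, ← mul_assoc, toWord_mul, toWord_mk, reduce_singleton]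
    have extend : p <+: (x * mk w).toWord →
        p <+: x.toWord ∨ ∃ w', w' <+: w ++ [a] ∧ mk p = x * mk w' := fun hp' =>
      (ih hp').imp_right fun ⟨w', hw', e⟩ => ⟨w', hw'.trans (List.prefix_append _ _), e⟩
    rw [hword] at hp
    rcases isReduced_toWord.reduce_append_singleton a with h | h
    · exact extend (hp.trans h)
    · rw [h, List.prefix_concat_iff] at hp
      rcases hp with rfl | hp
      · refine Or.inr ⟨w ++ [a], List.prefix_refl _, ?_⟩
        rw [← mul_mk, mk_toWord, mul_assoc, mul_mk]
      · exact extend hp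

def prefixWords [DecidableEq α] (S : Set (FreeGroup α)) : Set (List (α × Bool)) :=
  {q | ∃ s ∈ S, q <+: s.toWord}

theorem finite_prefixWords [DecidableEq α] {S : Set (FreeGroup α)} (hS : S.Finite) :
    (prefixWords S).Finite := by
  have : prefixWords S = ⋃ s ∈ S, {q | q ∈ s.toWord.inits} := by
    ext q
    simp [prefixWords, List.mem_inits]
  rw [this]
  exact hS.biUnion fun s _ => s.toWord.inits.finite_toSet

theorem exists_mem_prefixWords_of_mem_closure [DecidableEq α] {S : Set (FreeGroup α)}
    {h : FreeGroup α} (hh : h ∈ Subgroup.closure S) {p : List (α × Bool)} (hp : p <+: h.toWord) :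
    ∃ q ∈ prefixWords (insert 1 (S ∪ S⁻¹)), mk p * (mk q)⁻¹ ∈ Subgroup.closure S := by
  have trivial_case : ∀ {p}, ∀ s ∈ insert 1 (S ∪ S⁻¹), p <+: s.toWord →
      ∃ q ∈ prefixWords (insert 1 (S ∪ S⁻¹)), mk p * (mk q)⁻¹ ∈ Subgroup.closure S :=
    fun s hs hps => ⟨_, ⟨s, hs, hps⟩, by rw [mul_inv_cancel]; exact one_mem _⟩
  induction hh using Subgroup.closure_induction'' generalizing p with
  | mem s hs => exact trivial_case s (by simp [hs]) hp
  | inv_mem s hs => exact trivial_case s⁻¹ (by simp [hs]) hp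
  | one => exact trivial_case 1 (Set.mem_insert 1 _) hp
  | mul x y hx hy ihx ihy =>
    rw [← mk_toWord (x := y)] at hp
    rcases isPrefix_toWord_mul_mk x y.toWord hp with hp | ⟨w', hw', e⟩
    · exact ihx hp
    · obtain ⟨q, hq, hmem⟩ := ihy hw'
      exact ⟨q, hq, by rw [e, mul_assoc]; exact mul_mem hx hmem⟩

theorem IsReduced.exists_isCyclicallyReduced_append_singleton {L : List (α × Bool)}
    (hL : IsReduced L) (hne : L ≠ []) : ∃ b, IsCyclicallyReduced (L ++ [b]) := by
  set a := L.getLast hne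
  set f := L.head hne
  suffices ∃ b : α × Bool, (a.1 = b.1 → a.2 = b.2) ∧ (b.1 = f.1 → b.2 = f.2) by
    obtain ⟨b, hab, hbf⟩ := this
    refine ⟨b, ?_, ?_⟩
    · rw [IsReduced, List.isChain_append]
      exact ⟨hL, List.isChain_singleton b, by simpa [List.getLast?_eq_some_getLast hne] using hab⟩
    · simpa [List.head?_eq_some_head hne] using hbf
  by_cases haf : a.1 = f.1 → a.2 = f.2
  · exact ⟨a, fun _ => rfl, haf⟩
  push Not at haf
  -- a reduced word in a single generator has letters of a single sign, so `L` uses another one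
  obtain ⟨c, -, hca⟩ : ∃ c ∈ L, c.1 ≠ a.1 := by
    by_contra! hall
    have hsnd : (L.map Prod.snd).IsChain (· = ·) := (List.isChain_map Prod.snd).2 <|
      hL.imp_of_mem_imp fun x y hx hy h => h ((hall x hx).trans (hall y hy).symm)
    have hrep := List.isChain_eq_iff_eq_replicate.1 hsnd f.2
      (by simp [List.head?_eq_some_head hne, f])
    have ha : a.2 ∈ L.map Prod.snd := List.mem_map_of_mem (List.getLast_mem hne)
    rw [hrep] at ha
    exact haf.2 (List.eq_of_mem_replicate ha)
  exact ⟨(c.1, true), fun h => absurd h.symm hca, fun h => absurd (h.trans haf.1.symm) hca⟩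

theorem IsCyclicallyReduced.toWord_mk_pow [DecidableEq α] {L : List (α × Bool)}
    (hL : IsCyclicallyReduced L) (k : ℕ) : (mk L ^ k).toWord = (List.replicate k L).flatten := by
  rw [toWord_pow, toWord_mk, hL.isReduced.reduce_eq, (hL.flatten_replicate k).isReduced.reduce_eq]

theorem exists_relOrd_eq_zero_of_fg_of_index_eq_zero {K : Subgroup (FreeGroup α)} (hK : K.FG)
    (hidx : K.index = 0) : ∃ x, relOrd K x = 0 := by
  classical
  obtain ⟨S, rfl⟩ := hK
  set T := prefixWords (insert 1 ((S : Set (FreeGroup α)) ∪ (S : Set (FreeGroup α))⁻¹))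
  have hT : T.Finite := finite_prefixWords ((S.finite_toSet.union S.finite_toSet.inv).insert 1)
  obtain ⟨g, hg⟩ := Subgroup.exists_mul_inv_notMem_of_index_eq_zero hidx (hT.image mk)
  have hne : g.toWord ≠ [] := by
    rw [Ne, toWord_eq_nil_iff]
    rintro rfl
    exact hg 1 ⟨[], ⟨1, Set.mem_insert 1 _, List.nil_prefix⟩, rfl⟩ (by simp)
  obtain ⟨b, hb⟩ := isReduced_toWord.exists_isCyclicallyReduced_append_singleton hne
  refine ⟨mk (g.toWord ++ [b]), (relOrd_eq_zero_iff _ _).2 fun k hk hmem => ?_⟩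
  have hpre : g.toWord <+: (mk (g.toWord ++ [b]) ^ k).toWord := by
    obtain ⟨k, rfl⟩ := Nat.exists_eq_add_of_lt hk
    rw [hb.toWord_mk_pow, Nat.zero_add, List.replicate_succ, List.flatten_cons, List.append_assoc]
    exact List.prefix_append _ _
  obtain ⟨q, hq, hgq⟩ := exists_mem_prefixWords_of_mem_closure hmem hpre
  exact hg _ ⟨q, hq, rfl⟩ (by rwa [mk_toWord] at hgq)

end FreeGroup

/-- In `Fₙ × ℤ^m`, a finitely generated subgroup `H` admits an element of relative order `0`
iff `H` has infinite index. -/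
theorem exists_relOrd_zero_iff_infinite_index (n m : ℕ)
    (H : Subgroup (FreeGroup (Fin n) × Multiplicative (Fin m → ℤ))) (hH : H.FG) :
    (∃ g : FreeGroup (Fin n) × Multiplicative (Fin m → ℤ), relOrd H g = 0) ↔ H.index = 0 := by
  constructor
  · rintro ⟨g, hg⟩
    by_contra hidx
    obtain ⟨k, hk, -, hgk⟩ := Subgroup.exists_pow_mem_of_index_ne_zero hidx g
    exact (relOrd_eq_zero_iff H g).1 hg k hk hgk
  · intro hidx
    rw [Subgroup.index_eq_index_map_fst_mul_index_comap_inr, mul_eq_zero] at hidx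
    rcases hidx with hfree | habel
    · obtain ⟨x, hx⟩ := FreeGroup.exists_relOrd_eq_zero_of_fg_of_index_eq_zero (hH.map _) hfree
      exact ⟨(x, 1), relOrd_eq_zero_of_relOrd_map_eq_zero (MonoidHom.fst _ _) hx⟩
    · obtain ⟨z, hz⟩ := CommGroup.exists_relOrd_eq_zero_of_index_eq_zero habel
      exact ⟨(1, z), by rwa [relOrd_comap] at hz⟩
end
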